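/- Abstract compactness-to-Poincaré lemma: let X, Y₁, Y₂ be Hilbert spaces, A₁ : D(A₁) ⊆ X → Y₁ and A₂ : D(A₂) ⊆ X → Y₂ closed densely defined operators, and D := D(A₁) ∩ D(A₂) equipped with the graph norm. If the embedding D ↪ X is compact, then the kernel K = ker A₁ ∩ ker A₂ is finite dimensional and there exists c > 0 with ‖x‖_X ≤ c (‖A₁x‖²_{Y₁} + ‖A₂x‖²_{Y₂})^{1/2} for all x ∈ D orthogonal to K in X. -/

import Mathlib

/-!
Combine `A₁` and `A₂` into the single closed operator `A x = (A₁ x, A₂ x)` into `Y₁ × Y₂`, whose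
sup norm is dominated by `(‖A₁x‖² + ‖A₂x‖²)^{1/2}`. For one closed operator `A` whose domain
embeds compactly, the unit ball of `ker A` is sequentially compact because `ker A` is closed, so
`ker A` is finite dimensional by Riesz's theorem. If the Poincaré inequality failed on
`(ker A)ᗮ`, there would be unit vectors `xₙ ⊥ ker A` with `A xₙ → 0`; a subsequence converges to
some `z`, which by closedness of the graph and of `(ker A)ᗮ` is a unit vector in
`ker A ∩ (ker A)ᗮ = 0`.
-/

open Filter Topology RealInnerProductSpace

theorem Prod.norm_le_sqrt_sq_add_sq {E F : Type*} [SeminormedAddCommGroup E]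
    [SeminormedAddCommGroup F] (x : E × F) : ‖x‖ ≤ √(‖x.1‖ ^ 2 + ‖x.2‖ ^ 2) :=
  max_le (Real.le_sqrt_of_sq_le (le_add_of_nonneg_right (sq_nonneg _)))
    (Real.le_sqrt_of_sq_le (le_add_of_nonneg_left (sq_nonneg _)))

theorem LinearMap.mul_norm_le_norm_apply_of_forall_norm_eq_one {𝕜 E F : Type*} [RCLike 𝕜]
    [NormedAddCommGroup E] [NormedSpace 𝕜 E] [SeminormedAddCommGroup F] [NormedSpace 𝕜 F]
    (f : E →ₗ[𝕜] F) {p : Submodule 𝕜 E} {ε : ℝ} (h : ∀ x ∈ p, ‖x‖ = 1 → ε ≤ ‖f x‖) {x : E}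
    (hx : x ∈ p) : ε * ‖x‖ ≤ ‖f x‖ := by
  rcases eq_or_ne x 0 with rfl | hx0
  · simp
  have hx_pos : 0 < ‖x‖ := norm_pos_iff.2 hx0
  have := h _ (p.smul_mem (‖x‖⁻¹ : 𝕜) hx) (norm_smul_inv_norm hx0)
  rwa [map_smul, norm_smul, norm_inv, RCLike.norm_ofReal, abs_norm, inv_mul_eq_div,
    le_div_iff₀ hx_pos] at this

namespace LinearPMap

section Algebra

variable {R E F G : Type*} [Ring R] [AddCommGroup E] [Module R E] [AddCommGroup F] [Module R F]
  [AddCommGroup G] [Module R G]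

def ker (f : E →ₗ.[R] F) : Submodule R E :=
  (LinearMap.ker f.toFun).map f.domain.subtype

theorem mem_ker {f : E →ₗ.[R] F} {x : E} : x ∈ f.ker ↔ ∃ h : x ∈ f.domain, f ⟨x, h⟩ = 0 := by
  simp [ker]

theorem mem_ker_iff_mem_graph {f : E →ₗ.[R] F} {x : E} : x ∈ f.ker ↔ (x, 0) ∈ f.graph := by
  simp [mem_ker, mem_graph_iff]

def prod (f : E →ₗ.[R] F) (g : E →ₗ.[R] G) : E →ₗ.[R] F × G where
  domain := f.domain ⊓ g.domain
  toFun := (f.toFun ∘ₗ Submodule.inclusion inf_le_left).prod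
    (g.toFun ∘ₗ Submodule.inclusion inf_le_right)

theorem prod_apply (f : E →ₗ.[R] F) (g : E →ₗ.[R] G) (x : (f.prod g).domain) :
    f.prod g x = (f ⟨x, x.2.1⟩, g ⟨x, x.2.2⟩) :=
  rfl

theorem mem_graph_prod_iff {f : E →ₗ.[R] F} {g : E →ₗ.[R] G} {x : E} {y : F × G} :
    (x, y) ∈ (f.prod g).graph ↔ (x, y.1) ∈ f.graph ∧ (x, y.2) ∈ g.graph := by
  constructor
  · intro h
    have hd := mem_domain_of_mem_graph h
    obtain rfl := (image_iff hd).2 h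
    exact ⟨(image_iff hd.1).1 rfl, (image_iff hd.2).1 rfl⟩
  · rintro ⟨hf, hg⟩
    have hd : x ∈ (f.prod g).domain := ⟨mem_domain_of_mem_graph hf, mem_domain_of_mem_graph hg⟩
    exact (image_iff hd).1 (Prod.ext ((image_iff hd.1).2 hf) ((image_iff hd.2).2 hg))

theorem mem_ker_prod_iff {f : E →ₗ.[R] F} {g : E →ₗ.[R] G} {x : E} :
    x ∈ (f.prod g).ker ↔
      ∃ h₁ : x ∈ f.domain, ∃ h₂ : x ∈ g.domain, f ⟨x, h₁⟩ = 0 ∧ g ⟨x, h₂⟩ = 0 := by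
  simp only [mem_ker, prod_apply, Prod.mk_eq_zero]
  exact ⟨fun ⟨h, hfg⟩ => ⟨h.1, h.2, hfg⟩, fun ⟨h₁, h₂, hfg⟩ => ⟨⟨h₁, h₂⟩, hfg⟩⟩

end Algebra

section Topology

variable {R E F G : Type*} [CommRing R] [AddCommGroup E] [Module R E] [TopologicalSpace E]
  [AddCommGroup F] [Module R F] [TopologicalSpace F] [AddCommGroup G] [Module R G]
  [TopologicalSpace G]

theorem IsClosed.prod {f : E →ₗ.[R] F} {g : E →ₗ.[R] G} (hf : f.IsClosed) (hg : g.IsClosed) :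
    (f.prod g).IsClosed := by
  have : ((f.prod g).graph : Set (E × F × G)) =
      (fun p => (p.1, p.2.1)) ⁻¹' f.graph ∩ (fun p => (p.1, p.2.2)) ⁻¹' g.graph := by
    ext ⟨x, y⟩
    exact mem_graph_prod_iff
  rw [LinearPMap.IsClosed, this]
  exact (hf.preimage (by fun_prop)).inter (hg.preimage (by fun_prop))

theorem IsClosed.mem_ker_of_tendsto {f : E →ₗ.[R] F} (hf : f.IsClosed) {ι : Type*} {l : Filter ι}
    [l.NeBot] {u : ι → f.domain} {x : E} (hux : Tendsto (fun i => (u i : E)) l (𝓝 x))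
    (hfu : Tendsto (fun i => f (u i)) l (𝓝 0)) : x ∈ f.ker :=
  mem_ker_iff_mem_graph.2 <| hf.mem_of_tendsto (hux.prodMk_nhds hfu) <|
    Eventually.of_forall fun i => f.mem_graph (u i)

end Topology

section Normed

variable {𝕜 E F : Type*} [RCLike 𝕜] [NormedAddCommGroup E] [NormedSpace 𝕜 E]
  [NormedAddCommGroup F] [NormedSpace 𝕜 F]

/-- Sequential form of compactness of the embedding of `f.domain`, with the graph norm,
into `E`. -/
def HasCompactDomainEmbedding (f : E →ₗ.[𝕜] F) : Prop :=
  ∀ u : ℕ → f.domain, (∃ M : ℝ, ∀ k, ‖(u k : E)‖ ≤ M ∧ ‖f (u k)‖ ≤ M) →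
    ∃ φ : ℕ → ℕ, StrictMono φ ∧ ∃ x : E, Tendsto (fun k => (u (φ k) : E)) atTop (𝓝 x)

theorem HasCompactDomainEmbedding.finiteDimensional_ker {f : E →ₗ.[𝕜] F}
    (hc : f.HasCompactDomainEmbedding) (hf : f.IsClosed) : FiniteDimensional 𝕜 f.ker := by
  refine .of_isCompact_closedBall₀ 𝕜 one_pos (isCompact_iff_isSeqCompact.2 fun v hv => ?_)
  choose hv_dom hv_zero using fun k => mem_ker.1 (v k).2
  have hv_norm (k : ℕ) : ‖(v k : E)‖ ≤ 1 := by simpa using hv k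
  obtain ⟨φ, hφ, x, hx⟩ :=
    hc (fun k => ⟨v k, hv_dom k⟩) ⟨1, fun k => ⟨hv_norm k, by simp [hv_zero]⟩⟩
  have hxK : x ∈ f.ker := hf.mem_ker_of_tendsto hx (by simp [hv_zero])
  refine ⟨⟨x, hxK⟩, ?_, φ, hφ, tendsto_subtype_rng.2 hx⟩
  simpa using le_of_tendsto' hx.norm fun k => hv_norm (φ k)

theorem hasCompactDomainEmbedding_prod {G : Type*} [NormedAddCommGroup G] [NormedSpace 𝕜 G]
    {f : E →ₗ.[𝕜] F} {g : E →ₗ.[𝕜] G}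
    (h : ∀ (u : ℕ → E) (hf : ∀ k, u k ∈ f.domain) (hg : ∀ k, u k ∈ g.domain),
      (∃ M : ℝ, ∀ k, ‖u k‖ ≤ M ∧ ‖f ⟨u k, hf k⟩‖ ≤ M ∧ ‖g ⟨u k, hg k⟩‖ ≤ M) →
      ∃ φ : ℕ → ℕ, StrictMono φ ∧ ∃ x : E, Tendsto (u ∘ φ) atTop (𝓝 x)) :
    (f.prod g).HasCompactDomainEmbedding := by
  rintro u ⟨M, hM⟩
  refine h (fun k => u k) (fun k => (u k).2.1) (fun k => (u k).2.2) ⟨M, fun k => ?_⟩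
  obtain ⟨hu, hfgu⟩ := hM k
  rw [prod_apply, Prod.norm_def, max_le_iff] at hfgu
  exact ⟨hu, hfgu⟩

end Normed

section InnerProduct

variable {𝕜 E F : Type*} [RCLike 𝕜] [NormedAddCommGroup E] [InnerProductSpace 𝕜 E]
  [NormedAddCommGroup F] [NormedSpace 𝕜 F] {f : E →ₗ.[𝕜] F}

theorem HasCompactDomainEmbedding.exists_pos_le_norm_apply_of_norm_eq_one
    (hc : f.HasCompactDomainEmbedding) (hf : f.IsClosed) :
    ∃ ε > 0, ∀ x : f.domain, (x : E) ∈ f.kerᗮ → ‖x‖ = 1 → ε ≤ ‖f x‖ := by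
  by_contra! h
  choose u hu_perp hu_norm hu_small using fun n : ℕ => h (1 / (n + 1)) Nat.one_div_pos_of_nat
  have hu_bound (k : ℕ) : ‖f (u k)‖ ≤ 1 :=
    (hu_small k).le.trans (div_le_one_of_le₀ (by simp) (by positivity))
  obtain ⟨φ, hφ, z, hz⟩ := hc u ⟨1, fun k => ⟨(hu_norm k).le, hu_bound k⟩⟩
  have hfu : Tendsto (fun k => f (u (φ k))) atTop (𝓝 0) :=
    squeeze_zero_norm (fun k => (hu_small (φ k)).le)
      (tendsto_one_div_add_atTop_nhds_zero_nat.comp hφ.tendsto_atTop)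
  have hz_ker : z ∈ f.ker := hf.mem_ker_of_tendsto hz hfu
  have hz_perp : z ∈ f.kerᗮ :=
    f.ker.isClosed_orthogonal.mem_of_tendsto hz (Eventually.of_forall fun k => hu_perp (φ k))
  have hz_norm : ‖z‖ = 1 :=
    tendsto_nhds_unique hz.norm (tendsto_const_nhds.congr fun k => (hu_norm (φ k)).symm)
  have hz_zero : z = 0 := by simpa using f.ker.inf_orthogonal_eq_bot.le ⟨hz_ker, hz_perp⟩
  simp [hz_zero] at hz_norm

theorem HasCompactDomainEmbedding.exists_norm_le_mul_norm_apply
    (hc : f.HasCompactDomainEmbedding) (hf : f.IsClosed) :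
    ∃ c > 0, ∀ x : f.domain, (x : E) ∈ f.kerᗮ → ‖(x : E)‖ ≤ c * ‖f x‖ := by
  obtain ⟨ε, hε, h⟩ := hc.exists_pos_le_norm_apply_of_norm_eq_one hf
  refine ⟨ε⁻¹, inv_pos.2 hε, fun x hx => ?_⟩
  rw [inv_mul_eq_div, le_div_iff₀' hε]
  exact f.toFun.mul_norm_le_norm_apply_of_forall_norm_eq_one
    (p := f.kerᗮ.comap f.domain.subtype) h hx

end InnerProduct

end LinearPMap

theorem abstract_compactness_poincare_general
    {X Y1 Y2 : Type*}
    [NormedAddCommGroup X] [InnerProductSpace ℝ X]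
    [NormedAddCommGroup Y1] [InnerProductSpace ℝ Y1]
    [NormedAddCommGroup Y2] [InnerProductSpace ℝ Y2]
    (A1 : X →ₗ.[ℝ] Y1) (A2 : X →ₗ.[ℝ] Y2)
    (hA1 : A1.IsClosed) (hA2 : A2.IsClosed)
    -- compactness of the embedding `D(A₁) ∩ D(A₂) ↪ X` (graph norm):
    -- every graph-norm-bounded sequence has a subsequence converging in `X`
    (hcpt : ∀ (u : ℕ → X) (h1 : ∀ k, u k ∈ A1.domain) (h2 : ∀ k, u k ∈ A2.domain),
      (∃ M : ℝ, ∀ k, ‖u k‖ ≤ M ∧ ‖A1 ⟨u k, h1 k⟩‖ ≤ M ∧ ‖A2 ⟨u k, h2 k⟩‖ ≤ M) →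
      ∃ φ : ℕ → ℕ, StrictMono φ ∧ ∃ x : X, Tendsto (u ∘ φ) atTop (nhds x)) :
    ∃ K : Submodule ℝ X,
      (∀ x : X, x ∈ K ↔ ∃ h1 : x ∈ A1.domain, ∃ h2 : x ∈ A2.domain,
        A1 ⟨x, h1⟩ = 0 ∧ A2 ⟨x, h2⟩ = 0) ∧
      FiniteDimensional ℝ K ∧
      ∃ c : ℝ, 0 < c ∧ ∀ (x : X) (h1 : x ∈ A1.domain) (h2 : x ∈ A2.domain),
        (∀ k ∈ K, ⟪x, k⟫ = 0) →
        ‖x‖ ≤ c * Real.sqrt (‖A1 ⟨x, h1⟩‖ ^ 2 + ‖A2 ⟨x, h2⟩‖ ^ 2) := by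
  have hA := hA1.prod hA2
  have hc := LinearPMap.hasCompactDomainEmbedding_prod hcpt
  obtain ⟨c, hc_pos, hpoincare⟩ := hc.exists_norm_le_mul_norm_apply hA
  refine ⟨(A1.prod A2).ker, fun x => LinearPMap.mem_ker_prod_iff, hc.finiteDimensional_ker hA,
    c, hc_pos, fun x h1 h2 hx => ?_⟩
  calc ‖x‖ ≤ c * ‖A1.prod A2 ⟨x, h1, h2⟩‖ :=
        hpoincare ⟨x, h1, h2⟩ ((Submodule.mem_orthogonal' _ _).2 hx)
    _ ≤ c * √(‖A1 ⟨x, h1⟩‖ ^ 2 + ‖A2 ⟨x, h2⟩‖ ^ 2) := by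
        gcongr
        exact Prod.norm_le_sqrt_sq_add_sq _

/-- Abstract compactness-to-Poincaré lemma: `X, Y₁, Y₂` Hilbert spaces,
`A₁, A₂` closed densely defined (unbounded) operators from `X` to `Y₁` resp. `Y₂`.
If the embedding of `D := D(A₁) ∩ D(A₂)` (with the graph norm) into `X` is compact,
then the joint kernel `K = ker A₁ ∩ ker A₂` is finite dimensional and there is
`c > 0` with `‖x‖ ≤ c (‖A₁x‖² + ‖A₂x‖²)^{1/2}` for all `x ∈ D` orthogonal to `K`. -/
theorem abstract_compactness_poincare
    {X Y1 Y2 : Type*}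
    [NormedAddCommGroup X] [InnerProductSpace ℝ X] [CompleteSpace X]
    [NormedAddCommGroup Y1] [InnerProductSpace ℝ Y1] [CompleteSpace Y1]
    [NormedAddCommGroup Y2] [InnerProductSpace ℝ Y2] [CompleteSpace Y2]
    (A1 : X →ₗ.[ℝ] Y1) (A2 : X →ₗ.[ℝ] Y2)
    (hA1 : A1.IsClosed) (hA2 : A2.IsClosed)
    (hd1 : Dense (A1.domain : Set X)) (hd2 : Dense (A2.domain : Set X))
    -- compactness of the embedding `D(A₁) ∩ D(A₂) ↪ X` (graph norm):
    -- every graph-norm-bounded sequence has a subsequence converging in `X`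
    (hcpt : ∀ (u : ℕ → X) (h1 : ∀ k, u k ∈ A1.domain) (h2 : ∀ k, u k ∈ A2.domain),
      (∃ M : ℝ, ∀ k, ‖u k‖ ≤ M ∧ ‖A1 ⟨u k, h1 k⟩‖ ≤ M ∧ ‖A2 ⟨u k, h2 k⟩‖ ≤ M) →
      ∃ φ : ℕ → ℕ, StrictMono φ ∧ ∃ x : X, Tendsto (u ∘ φ) atTop (nhds x)) :
    ∃ K : Submodule ℝ X,
      (∀ x : X, x ∈ K ↔ ∃ h1 : x ∈ A1.domain, ∃ h2 : x ∈ A2.domain,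
        A1 ⟨x, h1⟩ = 0 ∧ A2 ⟨x, h2⟩ = 0) ∧
      FiniteDimensional ℝ K ∧
      ∃ c : ℝ, 0 < c ∧ ∀ (x : X) (h1 : x ∈ A1.domain) (h2 : x ∈ A2.domain),
        (∀ k ∈ K, ⟪x, k⟫ = 0) →
        ‖x‖ ≤ c * Real.sqrt (‖A1 ⟨x, h1⟩‖ ^ 2 + ‖A2 ⟨x, h2⟩‖ ^ 2) :=
  abstract_compactness_poincare_general A1 A2 hA1 hA2 hcpt
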